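/- One has c_p = 1 + ⟨ρ, w_p(α_p^∨)⟩; equivalently, writing w_p(α_p^∨) = α_p^∨ + γ^∨ with γ^∨ = w_p(α_p^∨) − α_p^∨, one has c_p = 2 + ⟨ρ, γ^∨⟩. -/

import Mathlib

open scoped Classical RealInnerProductSpace

noncomputable section

namespace Weng

/-- The completed Riemann zeta function `ζ̂(s) = π^(-s/2) Γ(s/2) ζ(s)`. -/
def zetaHat (s : ℂ) : ℂ := completedRiemannZeta s

/-- The entire Riemann xi function `ξ(s) = s (s-1) ζ̂(s)`
(written in terms of the entire function `Λ₀` so that the removable singularities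
at `s = 0, 1` are correctly filled in). -/
def xi (s : ℂ) : ℂ := s * (s - 1) * completedRiemannZeta₀ s + 1

variable (V : Type) [NormedAddCommGroup V] [InnerProductSpace ℝ V] [FiniteDimensional ℝ V]

/-- The coroot `α^∨ = 2 α / ⟨α, α⟩` of a vector `α`. -/
def coroot (α : V) : V := (2 / ⟪α, α⟫) • α

/-- Reflection in the hyperplane orthogonal to `α`. -/
def srefl (α : V) : V ≃ₗᵢ[ℝ] V := Submodule.reflection (ℝ ∙ α)ᗮ

variable {V}

/-- A reduced irreducible crystallographic root system `Φ` in a finite dimensional real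
inner product space `V`, together with a fundamental system `Δ = {α_1, …, α_r}` (indexed by
`Fin r`), the corresponding positive system `Φ⁺` (`Pos`), and the fundamental weights
`λ_1, …, λ_r` (`fw`). -/
structure RootSystemData (V : Type) [NormedAddCommGroup V] [InnerProductSpace ℝ V]
    [FiniteDimensional ℝ V] : Type where
  /-- the rank -/
  r : ℕ
  /-- the root system -/
  Φ : Finset V
  /-- the simple roots -/
  Δ : Fin r → V
  /-- the positive roots -/
  Pos : Finset V
  /-- the fundamental weights -/
  fw : Fin r → V
  hΔinj : Function.Injective Δ
  hΔPos : ∀ j, Δ j ∈ Pos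
  hspan : Submodule.span ℝ (Φ : Set V) = ⊤
  hzero : (0 : V) ∉ Φ
  hreduced : ∀ α ∈ Φ, ∀ t : ℝ, t • α ∈ (Φ : Set V) → t = 1 ∨ t = -1
  hcrys : ∀ α ∈ Φ, ∀ β ∈ Φ, ∃ n : ℤ, ⟪β, coroot V α⟫ = (n : ℝ)
  hrefl : ∀ α ∈ Φ, ∀ β ∈ Φ, β - ⟪β, coroot V α⟫ • α ∈ Φ
  hirred : ∀ S T : Finset V, S ∪ T = Φ → (∀ a ∈ S, ∀ b ∈ T, ⟪a, b⟫ = 0) →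
    S = ∅ ∨ T = ∅
  hPosSub : Pos ⊆ Φ
  hNegSub : ∀ α ∈ Pos, -α ∈ Φ
  hPosDec : ∀ α ∈ Φ, (α ∈ Pos ∧ -α ∉ Pos) ∨ (α ∉ Pos ∧ -α ∈ Pos)
  hPosComb : ∀ α ∈ Pos, ∃ c : Fin r → ℕ, α = ∑ j, (c j : ℝ) • Δ j
  hfw : ∀ i j, ⟪fw i, coroot V (Δ j)⟫ = if i = j then 1 else 0

namespace RootSystemData

variable {V : Type} [NormedAddCommGroup V] [InnerProductSpace ℝ V] [FiniteDimensional ℝ V]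
variable (d : RootSystemData V)

/-- The set `Φ⁻ = -Φ⁺` of negative roots, as a `Finset`. -/
def NegS : Finset V := d.Pos.image (fun α => -α)

/-- The Weyl vector `ρ = (1/2) Σ_{α ∈ Φ⁺} α`. -/
def rho : V := (2⁻¹ : ℝ) • ∑ α ∈ d.Pos, α

/-- The height `ht α^∨ = ⟨ρ, α^∨⟩` of the coroot of `α`. -/
def ht (α : V) : ℝ := ⟪d.rho, coroot V α⟫

/-- The Weyl group `W`, as the subgroup of the group of linear isometries of `V`
generated by the reflections in the simple roots. -/
def W : Subgroup (V ≃ₗᵢ[ℝ] V) := Subgroup.closure (Set.range fun j => srefl V (d.Δ j))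

/-- The subset `Δ_p = Δ \ {α_p}` of the simple roots, as a set of vectors. -/
def DeltaP (p : Fin d.r) : Set V := d.Δ '' {j | j ≠ p}

/-- `Δ_p` as a `Finset`. -/
def DeltaPFin (p : Fin d.r) : Finset V := (Finset.univ.filter (fun j => j ≠ p)).image d.Δ

/-- The subgroup `W_p` of `W` generated by the reflections in the simple roots in `Δ_p`. -/
def Wp (p : Fin d.r) : Subgroup (V ≃ₗᵢ[ℝ] V) :=
  Subgroup.closure ((fun j => srefl V (d.Δ j)) '' {j | j ≠ p})

/-- The root subsystem `Φ_p = Φ ∩ span_ℝ(Δ_p)`. -/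
def PhiP (p : Fin d.r) : Finset V :=
  d.Φ.filter (fun α => α ∈ Submodule.span ℝ (d.DeltaP p))

/-- The positive system `Φ_p⁺ = Φ⁺ ∩ Φ_p` of `Φ_p`. -/
def PhiPpos (p : Fin d.r) : Finset V := d.Pos ∩ d.PhiP p

/-- `ρ_p = (1/2) Σ_{α ∈ Φ_p⁺} α`. -/
def rhoP (p : Fin d.r) : V := (2⁻¹ : ℝ) • ∑ α ∈ d.PhiPpos p, α

/-- The constant `c_p = 2 ⟨λ_p - ρ_p, α_p^∨⟩`. -/
def cp (p : Fin d.r) : ℝ := 2 * ⟪d.fw p - d.rhoP p, coroot V (d.Δ p)⟫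

/-- The set `𝔚_p = {w ∈ W : Δ_p ⊆ w⁻¹(Δ ∪ Φ⁻)}`. -/
def frakW (p : Fin d.r) : Set (V ≃ₗᵢ[ℝ] V) :=
  {w | w ∈ d.W ∧ ∀ j : Fin d.r, j ≠ p →
    (w (d.Δ j) ∈ Set.range d.Δ ∨ w (d.Δ j) ∈ d.NegS)}

/-- `l_p(w) = |(Φ⁺ \ Φ_p⁺) ∩ w⁻¹ Φ⁻|`. -/
def lp (p : Fin d.r) (w : V ≃ₗᵢ[ℝ] V) : ℕ :=
  ((d.Pos \ d.PhiPpos p).filter (fun α => w α ∈ d.NegS)).card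

/-- `N_{p,w}(k,h) = #{α ∈ w⁻¹Φ⁻ : ⟨λ_p, α^∨⟩ = k, ht α^∨ = h}`. -/
def Npw (p : Fin d.r) (w : V ≃ₗᵢ[ℝ] V) (k h : ℝ) : ℕ :=
  (d.Φ.filter (fun α => w α ∈ d.NegS ∧ ⟪d.fw p, coroot V α⟫ = k ∧ d.ht α = h)).card

/-- `N_p(k,h) = #{α ∈ Φ : ⟨λ_p, α^∨⟩ = k, ht α^∨ = h}`. -/
def Np (p : Fin d.r) (k h : ℝ) : ℕ :=
  (d.Φ.filter (fun α => ⟪d.fw p, coroot V α⟫ = k ∧ d.ht α = h)).card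

/-- `M_p(k,h) = max_{w ∈ 𝔚_p} (N_{p,w}(k,h-1) - N_{p,w}(k,h))`. -/
def Mp (p : Fin d.r) (k h : ℝ) : ℤ :=
  sSup {n : ℤ | ∃ w ∈ d.frakW p, n = (d.Npw p w k (h - 1) : ℤ) - (d.Npw p w k h : ℤ)}

/-- The period `ω_p(s)`. -/
def omegaP (p : Fin d.r) (s : ℂ) : ℂ :=
  ∑ᶠ w ∈ d.frakW p,
    (∏ α ∈ d.Φ.filter (fun α => w α ∈ Set.range d.Δ ∧ α ∉ d.DeltaP p),
        ((⟪d.fw p, coroot V α⟫ : ℂ) * s + (d.ht α : ℂ) - 1)⁻¹) *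
    (∏ α ∈ d.Pos.filter (fun α => w α ∈ d.NegS ∧ α ∉ d.DeltaP p),
        zetaHat ((⟪d.fw p, coroot V α⟫ : ℂ) * s + (d.ht α : ℂ))) *
    (∏ α ∈ d.Φ.filter (fun α => -α ∈ d.Pos ∧ w (-α) ∈ d.NegS),
        (zetaHat ((⟪d.fw p, coroot V α⟫ : ℂ) * s + (d.ht α : ℂ)))⁻¹)

/-- The Weng zeta function
`ζ̂_p(s) = ω_p(s) ∏_{k ≥ 0} ∏_{h ≥ 2} ζ̂(k s + h)^{M_p(k,h)}`
(the product is finite: `M_p(k,h) = 0` outside of the displayed finite range). -/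
def zetaWeng (p : Fin d.r) (s : ℂ) : ℂ :=
  d.omegaP p s *
    ∏ k ∈ Finset.range (d.Φ.card + 2), ∏ h ∈ Finset.range (d.Φ.card + 2),
      (if 2 ≤ h then zetaHat ((k : ℂ) * s + (h : ℂ)) ^ (d.Mp p (k : ℝ) (h : ℝ)) else 1)


/-- `δ_{α,w} = 1` if `α ∈ w⁻¹Φ⁺`, and `δ_{α,w} = 0` if `α ∈ w⁻¹Φ⁻`. -/
def deltaIdx (w : V ≃ₗᵢ[ℝ] V) (α : V) : ℕ := if w α ∈ d.Pos then 1 else 0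

/-- `X̃_{p,w}(s) = ξ(2)^{|Δ_p ∩ w⁻¹Φ⁺|} ∏_{α ∈ Φ⁺ \ Δ_p} ξ(⟨λ_p,α^∨⟩ s + ht α^∨ + δ_{α,w})`. -/
def Xtilde (p : Fin d.r) (w : V ≃ₗᵢ[ℝ] V) (s : ℂ) : ℂ :=
  xi 2 ^ ((d.DeltaPFin p).filter (fun α => w α ∈ d.Pos)).card *
  ∏ α ∈ d.Pos.filter (fun α => α ∉ d.DeltaP p),
    xi ((⟪d.fw p, coroot V α⟫ : ℂ) * s + (d.ht α : ℂ) + (d.deltaIdx w α : ℂ))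

/-- The polynomial factor attached to a single `v ∈ 𝔚_p` appearing in `Q̃_{p,w}` and `Q_p`. -/
def Qfactor (p : Fin d.r) (v : V ≃ₗᵢ[ℝ] V) (s : ℂ) : ℂ :=
  (2 : ℂ) ^ ((d.DeltaPFin p).filter (fun α => v α ∈ d.Pos)).card *
  (∏ α ∈ d.Φ.filter (fun α => v α ∈ Set.range d.Δ ∧ α ∉ d.DeltaP p),
      ((⟪d.fw p, coroot V α⟫ : ℂ) * s + (d.ht α : ℂ) - 1)) *
  ∏ α ∈ d.Pos.filter (fun α => α ∉ d.DeltaP p),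
    ((⟪d.fw p, coroot V α⟫ : ℂ) * s + (d.ht α : ℂ) + (d.deltaIdx v α : ℂ)) *
      ((⟪d.fw p, coroot V α⟫ : ℂ) * s + (d.ht α : ℂ) + (d.deltaIdx v α : ℂ) - 1)

/-- The polynomial `Q̃_{p,w}(s)` (product of the `Qfactor`s over all `v ∈ 𝔚_p`, `v ≠ w`). -/
def Qtilde (p : Fin d.r) (w : V ≃ₗᵢ[ℝ] V) (s : ℂ) : ℂ :=
  ∏ᶠ v ∈ d.frakW p \ {w}, d.Qfactor p v s

/-- The polynomial `Q_p(s)` (product of the `Qfactor`s over all `v ∈ 𝔚_p`). -/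
def Qp (p : Fin d.r) (s : ℂ) : ℂ := ∏ᶠ v ∈ d.frakW p, d.Qfactor p v s

/-- The entire function `X_p(s) = Σ_{w ∈ 𝔚_p} Q̃_{p,w}(s) X̃_{p,w}(s)`. -/
def Xp (p : Fin d.r) (s : ℂ) : ℂ := ∑ᶠ w ∈ d.frakW p, d.Qtilde p w s * d.Xtilde p w s

/-- `X_{p,w}(s) = ∏_{α ∈ Φ⁺ \ Φ_p⁺} ξ(⟨λ_p,α^∨⟩ s + ht α^∨ + δ_{α,w})`. -/
def Xpw (p : Fin d.r) (w : V ≃ₗᵢ[ℝ] V) (s : ℂ) : ℂ :=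
  ∏ α ∈ d.Pos \ d.PhiPpos p,
    xi ((⟪d.fw p, coroot V α⟫ : ℂ) * s + (d.ht α : ℂ) + (d.deltaIdx w α : ℂ))

/-- The constant `C_{p,w} = ξ(2)^{|Δ_p ∩ w⁻¹Φ⁺|} ∏_{α ∈ Φ_p⁺ \ Δ_p} ξ(ht α^∨ + δ_{α,w})`. -/
def Cpw (p : Fin d.r) (w : V ≃ₗᵢ[ℝ] V) : ℂ :=
  xi 2 ^ ((d.DeltaPFin p).filter (fun α => w α ∈ d.Pos)).card *
  ∏ α ∈ (d.PhiPpos p).filter (fun α => α ∉ d.DeltaP p),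
    xi ((d.ht α : ℂ) + (d.deltaIdx w α : ℂ))

/-- `Q_{p,w}(s) = C_{p,w} Q̃_{p,w}(s)`. -/
def Qpw (p : Fin d.r) (w : V ≃ₗᵢ[ℝ] V) (s : ℂ) : ℂ := d.Cpw p w * d.Qtilde p w s

/-- `𝔚_p⁺ = {w ∈ 𝔚_p : l_p(w) < |Φ⁺ \ Φ_p⁺| / 2}`. -/
def frakWplus (p : Fin d.r) : Set (V ≃ₗᵢ[ℝ] V) :=
  {w ∈ d.frakW p | 2 * d.lp p w < (d.Pos \ d.PhiPpos p).card}

/-- `𝔚_p⁰ = {w ∈ 𝔚_p : l_p(w) = |Φ⁺ \ Φ_p⁺| / 2}`. -/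
def frakWzero (p : Fin d.r) : Set (V ≃ₗᵢ[ℝ] V) :=
  {w ∈ d.frakW p | 2 * d.lp p w = (d.Pos \ d.PhiPpos p).card}

/-- `𝔚_p‡ = {w ∈ 𝔚_p : l_p(w) = 0}`. -/
def frakWdag (p : Fin d.r) : Set (V ≃ₗᵢ[ℝ] V) :=
  {w ∈ d.frakW p | d.lp p w = 0}

/-- `E_p(s) = Σ_{w ∈ 𝔚_p⁺} Q_{p,w}(s) X_{p,w}(s) + (1/2) Σ_{w ∈ 𝔚_p⁰} Q_{p,w}(s) X_{p,w}(s)`. -/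
def Ep (p : Fin d.r) (s : ℂ) : ℂ :=
  (∑ᶠ w ∈ d.frakWplus p, d.Qpw p w s * d.Xpw p w s) +
    (2 : ℂ)⁻¹ * ∑ᶠ w ∈ d.frakWzero p, d.Qpw p w s * d.Xpw p w s

end RootSystemData

end Weng

open Weng

/-!
Write `ρ = (ρ - ρ_p) + ρ_p`. For every simple root `α_j`, the reflection `s_j` permutes
`Φ⁺ \ {α_j}`, so `s_j ρ = ρ - α_j`, i.e. `⟨ρ, α_j^∨⟩ = 1`; likewise `⟨ρ_p, α_j^∨⟩ = 1` for
`j ≠ p`. Hence `ρ - ρ_p` is orthogonal to `Δ_p` and fixed by `W_p`. Since `w_p Δ_p = -Δ_p`,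
`w_p` maps positive roots of `Φ_p` to negative ones, so `β ↦ -w_p β` permutes `Φ_p⁺` and
`w_p ρ_p = -ρ_p`. Therefore `ρ = w_p (ρ - 2ρ_p)`, and as `w_p` is an isometry,
`⟨ρ, w_p α_p^∨⟩ = ⟨ρ - 2ρ_p, α_p^∨⟩ = 1 - 2⟨ρ_p, α_p^∨⟩ = c_p - 1`.
-/

namespace Weng

theorem sum_apply_eq_sum_of_mapsTo {M : Type*} [AddCommMonoid M] {S : Finset M} {g : M → M}
    (hg : Function.Injective g) (hS : Set.MapsTo g S S) : ∑ x ∈ S, g x = ∑ x ∈ S, x :=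
  Finset.sum_nbij g hS hg.injOn (Finset.surjOn_of_injOn_of_card_le g hS hg.injOn le_rfl)
    fun _ _ => rfl

section Reflections

variable {V : Type} [NormedAddCommGroup V] [InnerProductSpace ℝ V]

theorem srefl_apply (α x : V) : srefl V α x = x - ⟪x, coroot V α⟫ • α := by
  rcases eq_or_ne α 0 with rfl | hα
  · simp only [srefl, coroot, Submodule.span_zero_singleton, Submodule.bot_orthogonal_eq_top,
      inner_zero_right, smul_zero, sub_zero]
    exact Submodule.reflection_mem_subspace_eq_self Submodule.mem_top
  · have hα2 : ‖α‖ ^ 2 ≠ 0 := by simpa using hα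
    rw [coroot, real_inner_smul_right]
    change Submodule.reflection (ℝ ∙ α)ᗮ x = _
    rw [Submodule.reflection_orthogonal_apply, Submodule.reflection_apply,
      Submodule.starProjection_singleton, real_inner_comm x α, real_inner_self_eq_norm_sq,
      two_smul]
    field_simp
    module

theorem srefl_self (α : V) : srefl V α α = -α :=
  Submodule.reflection_orthogonalComplement_singleton_eq_neg α

theorem srefl_srefl (α x : V) : srefl V α (srefl V α x) = x :=
  Submodule.reflection_reflection _ x

theorem inner_half_sum_coroot_eq_one {α : V} (hα : α ≠ 0) {S : Finset V} (hαS : α ∈ S)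
    (hS : Set.MapsTo (srefl V α) (S.erase α) (S.erase α)) :
    ⟪(2⁻¹ : ℝ) • ∑ β ∈ S, β, coroot V α⟫ = 1 := by
  set σ := ∑ β ∈ S, β
  have hσ : σ = ∑ β ∈ S.erase α, β + α := (Finset.sum_erase_add S id hαS).symm
  have hreflσ : srefl V α σ = σ - (2 : ℝ) • α := by
    rw [hσ, map_add, map_sum, sum_apply_eq_sum_of_mapsTo (srefl V α).injective hS, srefl_self]
    module
  have hcoeff : (⟪σ, coroot V α⟫ - 2) • α = 0 := by
    rw [srefl_apply, sub_right_inj] at hreflσ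
    rw [sub_smul, hreflσ, sub_self]
  have h2 : ⟪σ, coroot V α⟫ = 2 := sub_eq_zero.1 ((smul_eq_zero.1 hcoeff).resolve_right hα)
  rw [real_inner_smul_left, h2]
  norm_num

theorem mapsTo_of_mem_closure_srefl {ι : Type*} {a : ι → V} {s : Set ι} {S : Set V}
    (h : ∀ j ∈ s, Set.MapsTo (srefl V (a j)) S S) {w : V ≃ₗᵢ[ℝ] V}
    (hw : w ∈ Subgroup.closure ((fun j => srefl V (a j)) '' s)) : Set.MapsTo w S S := by
  induction hw using Subgroup.closure_induction'' with
  | mem _ hx =>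
    obtain ⟨j, hj, rfl⟩ := hx
    exact h j hj
  | inv_mem _ hx =>
    obtain ⟨j, hj, rfl⟩ := hx
    have hinv : (srefl V (a j))⁻¹ = srefl V (a j) := Submodule.reflection_inv
    exact hinv ▸ h j hj
  | one => exact Set.mapsTo_id S
  | mul _ _ _ _ hx hy => exact hx.comp hy

end Reflections

namespace RootSystemData

variable {V : Type} [NormedAddCommGroup V] [InnerProductSpace ℝ V] [FiniteDimensional ℝ V]
variable (d : RootSystemData V)

theorem delta_mem_Phi (j : Fin d.r) : d.Δ j ∈ d.Φ := d.hPosSub (d.hΔPos j)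

theorem delta_ne_zero (j : Fin d.r) : d.Δ j ≠ 0 := fun h => d.hzero (h ▸ d.delta_mem_Phi j)

theorem inner_delta_self_pos (j : Fin d.r) : 0 < ⟪d.Δ j, d.Δ j⟫ :=
  real_inner_self_pos.2 (d.delta_ne_zero j)

theorem fw_inner_delta (i j : Fin d.r) :
    ⟪d.fw i, d.Δ j⟫ = if i = j then ⟪d.Δ j, d.Δ j⟫ / 2 else 0 := by
  have h := d.hfw i j
  rw [coroot, real_inner_smul_right] at h
  have hne := (d.inner_delta_self_pos j).ne'
  split_ifs <;> split_ifs at h <;> field_simp at h <;> linarith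

theorem fw_inner_delta_nonneg (i j : Fin d.r) : 0 ≤ ⟪d.fw i, d.Δ j⟫ := by
  rw [d.fw_inner_delta]
  split_ifs
  exacts [by linarith [d.inner_delta_self_pos j], le_rfl]

theorem fw_inner_delta_self_pos (i : Fin d.r) : 0 < ⟪d.fw i, d.Δ i⟫ := by
  rw [d.fw_inner_delta, if_pos rfl]
  linarith [d.inner_delta_self_pos i]

theorem fw_inner_sum_smul_delta (c : Fin d.r → ℝ) (i : Fin d.r) :
    ⟪d.fw i, ∑ j, c j • d.Δ j⟫ = c i * ⟪d.fw i, d.Δ i⟫ := by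
  rw [inner_sum, Finset.sum_eq_single i]
  · exact real_inner_smul_right _ _ _
  · intro j _ hj
    rw [real_inner_smul_right, d.fw_inner_delta, if_neg (Ne.symm hj), mul_zero]
  · exact fun h => absurd (Finset.mem_univ i) h

theorem coeff_eq_zero_of_fw_inner_eq_zero {c : Fin d.r → ℝ} {i : Fin d.r}
    (h : ⟪d.fw i, ∑ j, c j • d.Δ j⟫ = 0) : c i = 0 := by
  rw [d.fw_inner_sum_smul_delta] at h
  exact (mul_eq_zero.1 h).resolve_right (d.fw_inner_delta_self_pos i).ne'

theorem fw_inner_nonneg_of_mem_Pos {β : V} (hβ : β ∈ d.Pos) (i : Fin d.r) :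
    0 ≤ ⟪d.fw i, β⟫ := by
  obtain ⟨c, rfl⟩ := d.hPosComb β hβ
  rw [d.fw_inner_sum_smul_delta]
  exact mul_nonneg (c i).cast_nonneg (d.fw_inner_delta_nonneg i i)

theorem eq_delta_of_mem_Pos {β : V} (hβ : β ∈ d.Pos) {j : Fin d.r}
    (h : ∀ i, i ≠ j → ⟪d.fw i, β⟫ = 0) : β = d.Δ j := by
  obtain ⟨c, rfl⟩ := d.hPosComb β hβ
  have hβj : ∑ j, (c j : ℝ) • d.Δ j = (c j : ℝ) • d.Δ j := by
    rw [Finset.sum_eq_single j]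
    · intro i _ hi
      rw [d.coeff_eq_zero_of_fw_inner_eq_zero (h i hi), zero_smul]
    · exact fun h => absurd (Finset.mem_univ j) h
  have hΦ : (c j : ℝ) • d.Δ j ∈ (d.Φ : Set V) := hβj ▸ d.hPosSub hβ
  rcases d.hreduced _ (d.delta_mem_Phi j) _ hΦ with h1 | h1
  · rw [hβj, h1, one_smul]
  · linarith [(c j).cast_nonneg (α := ℝ)]

theorem neg_mem_Pos_of_fw_inner_nonpos {β : V} (hβ : β ∈ d.Φ)
    (h : ∀ i, ⟪d.fw i, β⟫ ≤ 0) : -β ∈ d.Pos := by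
  refine ((d.hPosDec β hβ).resolve_left fun ⟨hpos, _⟩ => d.hzero ?_).2
  obtain ⟨c, rfl⟩ := d.hPosComb β hpos
  have hc0 : ∀ i, (c i : ℝ) = 0 := fun i => d.coeff_eq_zero_of_fw_inner_eq_zero
    (le_antisymm (h i) (d.fw_inner_nonneg_of_mem_Pos hpos i))
  simpa [hc0] using hβ

theorem srefl_delta_mem_Phi (j : Fin d.r) {β : V} (hβ : β ∈ d.Φ) :
    srefl V (d.Δ j) β ∈ d.Φ := by
  rw [srefl_apply]
  exact d.hrefl _ (d.delta_mem_Phi j) β hβ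

theorem mapsTo_srefl_delta_Pos_erase (j : Fin d.r) :
    Set.MapsTo (srefl V (d.Δ j)) (d.Pos.erase (d.Δ j)) (d.Pos.erase (d.Δ j)) := by
  intro β hβ
  obtain ⟨hne, hβP⟩ := Finset.mem_erase.1 hβ
  set γ := srefl V (d.Δ j) β with hγ_def
  have hγΦ : γ ∈ d.Φ := d.srefl_delta_mem_Phi j (d.hPosSub hβP)
  have hγP : γ ∈ d.Pos := by
    by_contra hγ
    have hnegγ : -γ ∈ d.Pos := ((d.hPosDec γ hγΦ).resolve_left fun h => hγ h.1).2
    refine hne (d.eq_delta_of_mem_Pos hβP fun i hi => ?_)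
    have hsum : ⟪d.fw i, β⟫ + ⟪d.fw i, -γ⟫ = 0 := by
      rw [← inner_add_right, hγ_def, srefl_apply, neg_sub, add_sub_cancel, real_inner_smul_right,
        d.fw_inner_delta, if_neg hi, mul_zero]
    linarith [d.fw_inner_nonneg_of_mem_Pos hβP i, d.fw_inner_nonneg_of_mem_Pos hnegγ i]
  refine Finset.mem_erase.2 ⟨fun h => ?_, hγP⟩
  have hβneg : β = -d.Δ j := by rw [← srefl_srefl (d.Δ j) β, ← hγ_def, h, srefl_self]
  rcases d.hPosDec _ (d.delta_mem_Phi j) with ⟨_, hn⟩ | ⟨hn, _⟩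
  exacts [hn (hβneg ▸ hβP), hn (d.hΔPos j)]

theorem rho_inner_coroot_delta (j : Fin d.r) : ⟪d.rho, coroot V (d.Δ j)⟫ = 1 :=
  inner_half_sum_coroot_eq_one (d.delta_ne_zero j) (d.hΔPos j) (d.mapsTo_srefl_delta_Pos_erase j)

theorem mem_PhiPpos_iff {p : Fin d.r} {β : V} :
    β ∈ d.PhiPpos p ↔ β ∈ d.Pos ∧ β ∈ d.Φ ∧ β ∈ Submodule.span ℝ (d.DeltaP p) := by
  rw [PhiPpos, Finset.mem_inter, PhiP, Finset.mem_filter]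

theorem delta_mem_span_DeltaP {p j : Fin d.r} (hj : j ≠ p) :
    d.Δ j ∈ Submodule.span ℝ (d.DeltaP p) :=
  Submodule.subset_span ⟨j, hj, rfl⟩

theorem mapsTo_srefl_delta_PhiPpos_erase {p j : Fin d.r} (hj : j ≠ p) :
    Set.MapsTo (srefl V (d.Δ j)) ((d.PhiPpos p).erase (d.Δ j)) ((d.PhiPpos p).erase (d.Δ j)) := by
  intro β hβ
  obtain ⟨hne, hβPp⟩ := Finset.mem_erase.1 hβ
  obtain ⟨hβP, hβΦ, hβspan⟩ := d.mem_PhiPpos_iff.1 hβPp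
  obtain ⟨hne', hγP⟩ :=
    Finset.mem_erase.1 (d.mapsTo_srefl_delta_Pos_erase j (Finset.mem_erase.2 ⟨hne, hβP⟩))
  refine Finset.mem_erase.2 ⟨hne', d.mem_PhiPpos_iff.2 ⟨hγP, d.srefl_delta_mem_Phi j hβΦ, ?_⟩⟩
  rw [srefl_apply]
  exact sub_mem hβspan (Submodule.smul_mem _ _ (d.delta_mem_span_DeltaP hj))

theorem rhoP_inner_coroot_delta {p j : Fin d.r} (hj : j ≠ p) :
    ⟪d.rhoP p, coroot V (d.Δ j)⟫ = 1 :=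
  inner_half_sum_coroot_eq_one (d.delta_ne_zero j)
    (d.mem_PhiPpos_iff.2 ⟨d.hΔPos j, d.delta_mem_Phi j, d.delta_mem_span_DeltaP hj⟩)
    (d.mapsTo_srefl_delta_PhiPpos_erase hj)

theorem inner_delta_rho_sub_rhoP {p j : Fin d.r} (hj : j ≠ p) :
    ⟪d.Δ j, d.rho - d.rhoP p⟫ = 0 := by
  have h : ⟪d.rho - d.rhoP p, coroot V (d.Δ j)⟫ = 0 := by
    rw [inner_sub_left, d.rho_inner_coroot_delta, d.rhoP_inner_coroot_delta hj, sub_self]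
  rw [coroot, real_inner_smul_right] at h
  rw [real_inner_comm]
  exact (mul_eq_zero.1 h).resolve_left (div_ne_zero two_ne_zero (d.inner_delta_self_pos j).ne')

theorem fw_inner_eq_zero_of_mem_span_DeltaP {p : Fin d.r} {x : V}
    (hx : x ∈ Submodule.span ℝ (d.DeltaP p)) : ⟪d.fw p, x⟫ = 0 := by
  refine Submodule.mem_orthogonal_singleton_iff_inner_right.1
    ((Submodule.span_le.2 ?_) hx)
  rintro _ ⟨j, hj, rfl⟩
  rw [SetLike.mem_coe, Submodule.mem_orthogonal_singleton_iff_inner_right, d.fw_inner_delta,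
    if_neg (Ne.symm hj)]

theorem mapsTo_Phi_of_mem_Wp {p : Fin d.r} {w : V ≃ₗᵢ[ℝ] V} (hw : w ∈ d.Wp p) :
    Set.MapsTo w d.Φ d.Φ :=
  mapsTo_of_mem_closure_srefl (fun j _ _ hβ => d.srefl_delta_mem_Phi j hβ) hw

theorem apply_eq_self_of_mem_Wp {p : Fin d.r} {x : V} (hx : ∀ j, j ≠ p → ⟪d.Δ j, x⟫ = 0)
    {w : V ≃ₗᵢ[ℝ] V} (hw : w ∈ d.Wp p) : w x = x := by
  refine mapsTo_of_mem_closure_srefl (S := {x}) (fun j hj y hy => ?_) hw rfl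
  rw [Set.mem_singleton_iff.1 hy, Set.mem_singleton_iff, srefl_apply, coroot,
    real_inner_smul_right, real_inner_comm (d.Δ j) x, hx j hj, mul_zero, zero_smul, sub_zero]

section LongestElement

variable {p : Fin d.r} {w : V ≃ₗᵢ[ℝ] V}

theorem map_mem_span_DeltaP (hlong : ∀ j : Fin d.r, j ≠ p → -(w (d.Δ j)) ∈ d.DeltaP p)
    {x : V} (hx : x ∈ Submodule.span ℝ (d.DeltaP p)) :
    w x ∈ Submodule.span ℝ (d.DeltaP p) := by
  have hle : (Submodule.span ℝ (d.DeltaP p)).map (w : V →ₗ[ℝ] V) ≤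
      Submodule.span ℝ (d.DeltaP p) := by
    rw [← Submodule.span_image, Submodule.span_le]
    rintro _ ⟨_, ⟨j, hj, rfl⟩, rfl⟩
    exact neg_mem_iff.1 (Submodule.subset_span (hlong j hj))
  exact hle ⟨x, hx, rfl⟩

theorem fw_inner_map_nonpos (hlong : ∀ j : Fin d.r, j ≠ p → -(w (d.Δ j)) ∈ d.DeltaP p)
    {β : V} (hβ : β ∈ d.PhiPpos p) (i : Fin d.r) : ⟪d.fw i, w β⟫ ≤ 0 := by
  obtain ⟨hβP, -, hβspan⟩ := d.mem_PhiPpos_iff.1 hβ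
  obtain ⟨c, hc⟩ := d.hPosComb β hβP
  have hcp : (c p : ℝ) = 0 :=
    d.coeff_eq_zero_of_fw_inner_eq_zero (hc ▸ d.fw_inner_eq_zero_of_mem_span_DeltaP hβspan)
  rw [hc, map_sum, inner_sum]
  refine Finset.sum_nonpos fun j _ => ?_
  rw [map_smul, real_inner_smul_right]
  rcases eq_or_ne j p with rfl | hj
  · rw [hcp, zero_mul]
  · obtain ⟨k, -, hk⟩ := hlong j hj
    rw [← neg_neg (w (d.Δ j)), ← hk, inner_neg_right, mul_neg, neg_nonpos]
    exact mul_nonneg (c j).cast_nonneg (d.fw_inner_delta_nonneg i k)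

theorem neg_map_mem_PhiPpos (hw : w ∈ d.Wp p)
    (hlong : ∀ j : Fin d.r, j ≠ p → -(w (d.Δ j)) ∈ d.DeltaP p)
    {β : V} (hβ : β ∈ d.PhiPpos p) : -(w β) ∈ d.PhiPpos p := by
  obtain ⟨-, hβΦ, hβspan⟩ := d.mem_PhiPpos_iff.1 hβ
  have hneg : -(w β) ∈ d.Pos := d.neg_mem_Pos_of_fw_inner_nonpos
    (d.mapsTo_Phi_of_mem_Wp hw hβΦ) (d.fw_inner_map_nonpos hlong hβ)
  exact d.mem_PhiPpos_iff.2
    ⟨hneg, d.hPosSub hneg, neg_mem (d.map_mem_span_DeltaP hlong hβspan)⟩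

theorem map_rhoP (hw : w ∈ d.Wp p)
    (hlong : ∀ j : Fin d.r, j ≠ p → -(w (d.Δ j)) ∈ d.DeltaP p) :
    w (d.rhoP p) = -d.rhoP p := by
  have hsum : ∑ β ∈ d.PhiPpos p, -(w β) = ∑ β ∈ d.PhiPpos p, β :=
    sum_apply_eq_sum_of_mapsTo (neg_injective.comp w.injective)
      fun _ hβ => d.neg_map_mem_PhiPpos hw hlong hβ
  rw [rhoP, map_smul, map_sum, ← neg_neg (∑ β ∈ d.PhiPpos p, w β), ← Finset.sum_neg_distrib,
    hsum, smul_neg]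

theorem rho_inner_map (hw : w ∈ d.Wp p)
    (hlong : ∀ j : Fin d.r, j ≠ p → -(w (d.Δ j)) ∈ d.DeltaP p) (x : V) :
    ⟪d.rho, w x⟫ = ⟪d.rho - (2 : ℝ) • d.rhoP p, x⟫ := by
  have hρ : w (d.rho - (2 : ℝ) • d.rhoP p) = d.rho := by
    have hfix := d.apply_eq_self_of_mem_Wp (fun j hj => d.inner_delta_rho_sub_rhoP hj) hw
    rw [show d.rho - (2 : ℝ) • d.rhoP p = (d.rho - d.rhoP p) - d.rhoP p by module, map_sub,
      hfix, d.map_rhoP hw hlong, sub_neg_eq_add, sub_add_cancel]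
  rw [← w.inner_map_map (d.rho - (2 : ℝ) • d.rhoP p) x, hρ]

end LongestElement

theorem cp_eq (p : Fin d.r) : d.cp p = 2 - 2 * ⟪d.rhoP p, coroot V (d.Δ p)⟫ := by
  rw [cp, inner_sub_left, d.hfw, if_pos rfl]
  ring

end RootSystemData

end Weng

/-- `c_p = 1 + ⟨ρ, w_p(α_p^∨)⟩`; equivalently, writing `w_p(α_p^∨) = α_p^∨ + γ^∨`
with `γ^∨ = w_p(α_p^∨) - α_p^∨`, one has `c_p = 2 + ⟨ρ, γ^∨⟩`. -/
theorem weng_cp_eq_one_add_height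
    {V : Type} [NormedAddCommGroup V] [InnerProductSpace ℝ V] [FiniteDimensional ℝ V]
    (d : RootSystemData V) (p : Fin d.r)
    (wₚ : V ≃ₗᵢ[ℝ] V)
    (hwₚW : wₚ ∈ d.Wp p) (hwₚlong : ∀ j : Fin d.r, j ≠ p → -(wₚ (d.Δ j)) ∈ d.DeltaP p) :
    d.cp p = 1 + ⟪d.rho, wₚ (coroot V (d.Δ p))⟫ ∧
    d.cp p = 2 + ⟪d.rho, wₚ (coroot V (d.Δ p)) - coroot V (d.Δ p)⟫ := by
  have hheight : ⟪d.rho, wₚ (coroot V (d.Δ p))⟫ = 1 - 2 * ⟪d.rhoP p, coroot V (d.Δ p)⟫ := by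
    rw [d.rho_inner_map hwₚW hwₚlong, inner_sub_left, d.rho_inner_coroot_delta,
      real_inner_smul_left]
  constructor
  · rw [d.cp_eq, hheight]
    ring
  · rw [inner_sub_right, hheight, d.rho_inner_coroot_delta, d.cp_eq]
    ring
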